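/- Let E : ℝⁿ → ℝ be C^∞, positive and periodic, let μ > 0, set s̃ := μ log E, and let φ₁, …, φₙ be C^∞ periodic functions with ⟨φⱼ⟩ = 0 and div(φⱼ ∇s̃ − μ ∇φⱼ) = ∂_{ξⱼ}(E/⟨E⟩). Define T_{jk} := δ_{jk} − ⟨φⱼ ∂_{ξ_k}s̃⟩. Then for a unit vector u ∈ ℝⁿ one has uᵀTu = 1 if and only if the directional derivative u·∇E vanishes identically, i.e. if and only if E is invariant under translations along u. -/

import Mathlib

open MeasureTheory

noncomputable section

/-- Partial derivative in the i-th coordinate of a function on ℝⁿ. -/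
def pd {n : ℕ} (i : Fin n) (f : (Fin n → ℝ) → ℝ) (ξ : Fin n → ℝ) : ℝ :=
  deriv (fun t => f (Function.update ξ i t)) (ξ i)

/-- Euclidean divergence of a vector field on ℝⁿ. -/
def divS {n : ℕ} (v : (Fin n → ℝ) → (Fin n → ℝ)) (ξ : Fin n → ℝ) : ℝ :=
  ∑ i, pd i (fun η => v η i) ξ

/-- Periodicity: ℓᵢ-periodic in the i-th coordinate for each i. -/
def PerS {n : ℕ} (ℓ : Fin n → ℝ) (f : (Fin n → ℝ) → ℝ) : Prop :=
  ∀ (ξ : Fin n → ℝ) (i : Fin n), f (Function.update ξ i (ξ i + ℓ i)) = f ξ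

/-- Mean over one periodicity cell. -/
def meanS {n : ℕ} (ℓ : Fin n → ℝ) (f : (Fin n → ℝ) → ℝ) : ℝ :=
  (1 / ∏ i, ℓ i) * ∫ ξ in Set.univ.pi fun i => Set.Ioc (0:ℝ) (ℓ i), f ξ

/-- Mean of an ℓ-periodic function of one real variable. -/
def mean1 (ℓ : ℝ) (f : ℝ → ℝ) : ℝ := (1 / ℓ) * ∫ y in (0:ℝ)..ℓ, f y

namespace StmtAux

variable {n : ℕ}

lemma hasDerivAt_slice {f : (Fin n → ℝ) → ℝ} {L : (Fin n → ℝ) →L[ℝ] ℝ}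
    {ξ : Fin n → ℝ} {i : Fin n} {t : ℝ}
    (h : HasFDerivAt f L (Function.update ξ i t)) :
    HasDerivAt (fun s => f (Function.update ξ i s)) (L (Pi.single i 1)) t :=
  h.comp_hasDerivAt t (hasDerivAt_update ξ i t)

lemma hasDerivAt_slice' {f : (Fin n → ℝ) → ℝ} (hf : ContDiff ℝ (⊤ : ℕ∞) f)
    (ξ : Fin n → ℝ) (i : Fin n) (t : ℝ) :
    HasDerivAt (fun s => f (Function.update ξ i s))
      (fderiv ℝ f (Function.update ξ i t) (Pi.single i 1)) t :=
  hasDerivAt_slice ((hf.differentiable (by simp) _).hasFDerivAt)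

lemma pd_eq_fderiv {f : (Fin n → ℝ) → ℝ} (hf : ContDiff ℝ (⊤ : ℕ∞) f)
    (i : Fin n) (ξ : Fin n → ℝ) :
    pd i f ξ = fderiv ℝ f ξ (Pi.single i 1) := by
  have h := hasDerivAt_slice' hf ξ i (ξ i)
  rw [Function.update_eq_self] at h
  exact h.deriv

lemma pd_hasDerivAt {f : (Fin n → ℝ) → ℝ} (hf : ContDiff ℝ (⊤ : ℕ∞) f)
    (ξ : Fin n → ℝ) (i : Fin n) (t : ℝ) :
    HasDerivAt (fun s => f (Function.update ξ i s))
      (pd i f (Function.update ξ i t)) t := by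
  have h := hasDerivAt_slice' hf ξ i t
  rwa [← pd_eq_fderiv hf] at h

lemma pd_hasDerivAt' {f : (Fin n → ℝ) → ℝ} (hf : ContDiff ℝ (⊤ : ℕ∞) f)
    (ξ : Fin n → ℝ) (i : Fin n) :
    HasDerivAt (fun s => f (Function.update ξ i s)) (pd i f ξ) (ξ i) := by
  have h := pd_hasDerivAt hf ξ i (ξ i)
  rwa [Function.update_eq_self] at h

lemma contDiff_pd {f : (Fin n → ℝ) → ℝ} (hf : ContDiff ℝ (⊤ : ℕ∞) f) (i : Fin n) :
    ContDiff ℝ (⊤ : ℕ∞) (pd i f) := by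
  have : pd i f = fun ξ => fderiv ℝ f ξ (Pi.single i 1) := by
    funext ξ; exact pd_eq_fderiv hf i ξ
  rw [this]
  exact (hf.fderiv_right (by simp)).clm_apply contDiff_const

lemma continuous_pd {f : (Fin n → ℝ) → ℝ} (hf : ContDiff ℝ (⊤ : ℕ∞) f) (i : Fin n) :
    Continuous (pd i f) := (contDiff_pd hf i).continuous

lemma pd_mul {f g : (Fin n → ℝ) → ℝ} (hf : ContDiff ℝ (⊤ : ℕ∞) f) (hg : ContDiff ℝ (⊤ : ℕ∞) g)
    (i : Fin n) (ξ : Fin n → ℝ) :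
    pd i (fun η => f η * g η) ξ = pd i f ξ * g ξ + f ξ * pd i g ξ := by
  have h1 := pd_hasDerivAt' hf ξ i
  have h2 := pd_hasDerivAt' hg ξ i
  have := h1.mul h2
  simp only [Function.update_eq_self] at this
  exact this.deriv

lemma pd_const_mul (c : ℝ) {f : (Fin n → ℝ) → ℝ} (hf : ContDiff ℝ (⊤ : ℕ∞) f)
    (i : Fin n) (ξ : Fin n → ℝ) :
    pd i (fun η => c * f η) ξ = c * pd i f ξ := by
  exact ((pd_hasDerivAt' hf ξ i).const_mul c).deriv

lemma pd_sum {ι : Type*} (s : Finset ι) (f : ι → (Fin n → ℝ) → ℝ)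
    (hf : ∀ j, ContDiff ℝ (⊤ : ℕ∞) (f j)) (i : Fin n) (ξ : Fin n → ℝ) :
    pd i (fun η => ∑ j ∈ s, f j η) ξ = ∑ j ∈ s, pd i (f j) ξ := by
  have h : HasDerivAt (fun t => ∑ j ∈ s, f j (Function.update ξ i t))
      (∑ j ∈ s, pd i (f j) ξ) (ξ i) :=
    HasDerivAt.fun_sum fun j _ => pd_hasDerivAt' (hf j) ξ i
  exact h.deriv

lemma pd_log {E : (Fin n → ℝ) → ℝ} (hE : ContDiff ℝ (⊤ : ℕ∞) E) (hEpos : ∀ ξ, 0 < E ξ)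
    (μ : ℝ) (i : Fin n) (ξ : Fin n → ℝ) :
    pd i (fun ζ => μ * Real.log (E ζ)) ξ = μ * (pd i E ξ / E ξ) := by
  have h := ((pd_hasDerivAt' hE ξ i).log
    (by rw [Function.update_eq_self]; exact (hEpos ξ).ne')).const_mul μ
  rw [Function.update_eq_self] at h
  exact h.deriv

lemma pd_div {f g : (Fin n → ℝ) → ℝ} (hf : ContDiff ℝ (⊤ : ℕ∞) f) (hg : ContDiff ℝ (⊤ : ℕ∞) g)
    (hgx : ∀ ξ, g ξ ≠ 0) (i : Fin n) (ξ : Fin n → ℝ) :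
    pd i (fun η => f η / g η) ξ
      = (pd i f ξ * g ξ - f ξ * pd i g ξ) / (g ξ)^2 := by
  have h := (pd_hasDerivAt' hf ξ i).div (pd_hasDerivAt' hg ξ i)
    (by rw [Function.update_eq_self]; exact hgx ξ)
  rw [Function.update_eq_self] at h
  exact h.deriv

lemma pd_zero_fun (i : Fin n) (ξ : Fin n → ℝ) :
    pd i (fun _ : Fin n → ℝ => (0:ℝ)) ξ = 0 := by
  simp [pd]

lemma fderiv_zero_of_pd_zero {f : (Fin n → ℝ) → ℝ} (hf : ContDiff ℝ (⊤ : ℕ∞) f)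
    {ξ : Fin n → ℝ} (h : ∀ i, pd i f ξ = 0) : fderiv ℝ f ξ = 0 := by
  ext v
  have hv : v = ∑ i, (v i) • (Pi.single i 1 : Fin n → ℝ) := by
    funext j
    simp [Finset.sum_apply, Pi.single_apply]
  rw [show (fderiv ℝ f ξ) v
      = fderiv ℝ f ξ (∑ i, (v i) • (Pi.single i 1 : Fin n → ℝ)) by rw [← hv]]
  rw [map_sum]
  simp only [ContinuousLinearMap.map_smul]
  have : ∀ i : Fin n, fderiv ℝ f ξ (Pi.single i 1) = 0 := fun i => by
    rw [← pd_eq_fderiv hf]; exact h i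
  simp [this]

lemma const_of_pd_zero {f : (Fin n → ℝ) → ℝ} (hf : ContDiff ℝ (⊤ : ℕ∞) f)
    (h : ∀ ξ i, pd i f ξ = 0) (ξ η : Fin n → ℝ) : f ξ = f η :=
  is_const_of_fderiv_eq_zero (hf.differentiable (by simp))
    (fun x => fderiv_zero_of_pd_zero hf (h x)) ξ η

lemma slice_periodic {ℓ : Fin n → ℝ} {f : (Fin n → ℝ) → ℝ} (hf : PerS ℓ f)
    (ξ : Fin n → ℝ) (i : Fin n) :
    Function.Periodic (fun t => f (Function.update ξ i t)) (ℓ i) := by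
  intro t
  have h := hf (Function.update ξ i t) i
  simpa [Function.update_idem] using h

lemma per_update_int {ℓ : Fin n → ℝ} {f : (Fin n → ℝ) → ℝ} (hf : PerS ℓ f)
    (ξ : Fin n → ℝ) (i : Fin n) (m : ℤ) :
    f (Function.update ξ i (ξ i + m * ℓ i)) = f ξ := by
  have h := ((slice_periodic hf ξ i).int_mul m) (ξ i)
  simpa [Function.update_eq_self, add_comm] using h

lemma pd_per {ℓ : Fin n → ℝ} {f : (Fin n → ℝ) → ℝ} (hf : PerS ℓ f) (i : Fin n) :
    PerS ℓ (pd i f) := by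
  intro ξ j
  rcases eq_or_ne j i with rfl | hne
  · show deriv (fun t => f (Function.update (Function.update ξ j (ξ j + ℓ j)) j t)) _ = _
    simp only [Function.update_idem, Function.update_self]
    rw [← deriv_comp_add_const]
    congr 1
    funext t
    exact slice_periodic hf ξ j t
  · show deriv (fun t => f (Function.update (Function.update ξ j (ξ j + ℓ j)) i t)) _ = _
    have hfun : (fun t => f (Function.update (Function.update ξ j (ξ j + ℓ j)) i t))
        = fun t => f (Function.update ξ i t) := by
      funext t
      rw [Function.update_comm hne]
      have h := hf (Function.update ξ i t) j
      rwa [Function.update_of_ne hne] at h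
    rw [hfun, Function.update_of_ne hne.symm]
    rfl

/-- reduction to the fundamental cell -/
lemma per_reduce {ℓ : Fin n → ℝ} (hℓ : ∀ i, 0 < ℓ i) {f : (Fin n → ℝ) → ℝ}
    (hf : PerS ℓ f) (ξ : Fin n → ℝ) :
    f (fun i => ℓ i * Int.fract (ξ i / ℓ i)) = f ξ := by
  classical
  have key : ∀ S : Finset (Fin n),
      f (fun i => if i ∈ S then ℓ i * Int.fract (ξ i / ℓ i) else ξ i) = f ξ := by
    intro S
    induction S using Finset.induction_on with
    | empty => simp
    | @insert j S hjS ih =>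
      set h : Fin n → ℝ := fun i => if i ∈ S then ℓ i * Int.fract (ξ i / ℓ i) else ξ i with hh
      have heq : (fun i => if i ∈ insert j S then ℓ i * Int.fract (ξ i / ℓ i) else ξ i)
          = Function.update h j (ℓ j * Int.fract (ξ j / ℓ j)) := by
        funext i
        rcases eq_or_ne i j with rfl | hij
        · simp [hh, hjS]
        · simp [Function.update_of_ne hij, hh, Finset.mem_insert, hij]
      rw [heq, ← ih]
      have hval : ℓ j * Int.fract (ξ j / ℓ j) = h j + (-⌊ξ j / ℓ j⌋ : ℤ) * ℓ j := by
        have hj : h j = ξ j := by simp [hh, hjS]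
        have hz : ℓ j ≠ 0 := (hℓ j).ne'
        rw [hj, Int.fract, mul_sub, mul_div_cancel₀ _ hz]
        push_cast
        ring
      rw [hval]
      exact per_update_int hf h j _
  have := key Finset.univ
  simpa using this

lemma reduce_mem_Ico {ℓ : Fin n → ℝ} (hℓ : ∀ i, 0 < ℓ i) (ξ : Fin n → ℝ) (i : Fin n) :
    ℓ i * Int.fract (ξ i / ℓ i) ∈ Set.Ico (0:ℝ) (ℓ i) := by
  constructor
  · exact mul_nonneg (hℓ i).le (Int.fract_nonneg _)
  · have := Int.fract_lt_one (ξ i / ℓ i)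
    calc ℓ i * Int.fract (ξ i / ℓ i) < ℓ i * 1 := mul_lt_mul_of_pos_left this (hℓ i)
      _ = ℓ i := mul_one _

lemma box_subset_Icc {ℓ : Fin n → ℝ} :
    (Set.univ.pi fun i => Set.Ioc (0:ℝ) (ℓ i)) ⊆ Set.Icc 0 ℓ := by
  rw [← Set.pi_univ_Icc]
  exact Set.pi_mono fun i _ => Set.Ioc_subset_Icc_self

lemma integrableOn_box {ℓ : Fin n → ℝ} {f : (Fin n → ℝ) → ℝ} (hf : Continuous f) :
    IntegrableOn f (Set.univ.pi fun i => Set.Ioc (0:ℝ) (ℓ i)) :=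
  (hf.continuousOn.integrableOn_compact isCompact_Icc).mono_set box_subset_Icc

lemma insertNth_top_eq {m : ℕ} (ℓ : Fin (m+1) → ℝ) (i : Fin (m+1)) (x : Fin m → ℝ) :
    Fin.insertNth (α := fun _ => ℝ) i (ℓ i) x
      = Function.update (Fin.insertNth (α := fun _ => ℝ) i 0 x) i
          (Fin.insertNth (α := fun _ => ℝ) i 0 x i + ℓ i) := by
  funext j
  rcases eq_or_ne j i with rfl | hne
  · simp
  · rcases Fin.exists_succAbove_eq hne with ⟨j', rfl⟩
    simp [Function.update_of_ne (Fin.succAbove_ne i j')]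

/-- integral of a partial derivative of a smooth periodic function over the cell vanishes -/
lemma integral_pd_eq_zero {m : ℕ} {ℓ : Fin (m+1) → ℝ} (hℓ : ∀ i, 0 < ℓ i)
    {f : (Fin (m+1) → ℝ) → ℝ} (hf : ContDiff ℝ (⊤ : ℕ∞) f) (hper : PerS ℓ f) (i : Fin (m+1)) :
    ∫ ξ in Set.univ.pi fun k => Set.Ioc (0:ℝ) (ℓ k), pd i f ξ = 0 := by
  classical
  have hle : (0 : Fin (m+1) → ℝ) ≤ ℓ := fun k => (hℓ k).le
  set F : Fin (m+1) → (Fin (m+1) → ℝ) → ℝ := fun k η => if k = i then f η else 0 with hF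
  set F' : Fin (m+1) → (Fin (m+1) → ℝ) → (Fin (m+1) → ℝ) →L[ℝ] ℝ :=
    fun k x => if k = i then fderiv ℝ f x else 0 with hF'
  have Hc : ∀ k, ContinuousOn (F k) (Set.Icc 0 ℓ) := by
    intro k
    by_cases hk : k = i
    · simpa [hF, hk] using hf.continuous.continuousOn
    · simpa [hF, hk] using continuousOn_const
  have Hd : ∀ x ∈ (Set.pi Set.univ fun k => Set.Ioo (0:ℝ) (ℓ k)) \ (∅ : Set _),
      ∀ k, HasFDerivAt (F k) (F' k x) x := by
    intro x _ k
    by_cases hk : k = i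
    · simpa [hF, hF', hk] using (hf.differentiable (by simp) x).hasFDerivAt
    · simpa [hF, hF', hk] using hasFDerivAt_const (0:ℝ) x
  have hsum : ∀ x, (∑ k, F' k x (Pi.single k 1)) = pd i f x := by
    intro x
    rw [pd_eq_fderiv hf]
    rw [Finset.sum_eq_single i]
    · simp [hF']
    · intro k _ hk
      simp [hF', hk]
    · simp
  have Hi : IntegrableOn (fun x => ∑ k, F' k x (Pi.single k 1)) (Set.Icc 0 ℓ) := by
    have : Continuous (pd i f) := continuous_pd hf i
    refine (this.continuousOn.integrableOn_compact isCompact_Icc).congr_fun ?_ measurableSet_Icc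
    exact fun x _ => (hsum x).symm
  have key := integral_divergence_of_hasFDerivAt_off_countable'
    (a := (0 : Fin (m+1) → ℝ)) (b := ℓ) hle F F' ∅ Set.countable_empty Hc Hd Hi
  have hbd : ∀ k : Fin (m+1),
      ((∫ x in Set.Icc ((0 : Fin (m+1) → ℝ) ∘ k.succAbove) (ℓ ∘ k.succAbove), F k (k.insertNth (ℓ k) x)) -
        ∫ x in Set.Icc ((0 : Fin (m+1) → ℝ) ∘ k.succAbove) (ℓ ∘ k.succAbove), F k (k.insertNth ((0 : Fin (m+1) → ℝ) k) x)) = 0 := by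
    intro k
    by_cases hk : k = i
    · subst hk
      have hpt : ∀ x : Fin m → ℝ,
          F k (k.insertNth (ℓ k) x) = F k (k.insertNth ((0 : Fin (m+1) → ℝ) k) x) := by
        intro x
        have h0 : ((0 : Fin (m+1) → ℝ) k) = (0:ℝ) := rfl
        rw [h0, insertNth_top_eq ℓ k x]
        simp only [hF, if_pos rfl]
        exact hper (k.insertNth (0:ℝ) x) k
      rw [show (fun x : Fin m → ℝ => F k (k.insertNth (ℓ k) x))
            = fun x : Fin m → ℝ => F k (k.insertNth ((0 : Fin (m+1) → ℝ) k) x) from funext hpt]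
      exact sub_self _
    · simp [hF, hk]
  rw [show (fun x => ∑ k, F' k x (Pi.single k 1)) = fun x => pd i f x from funext hsum] at key
  rw [Finset.sum_congr rfl (fun k _ => hbd k), Finset.sum_const_zero] at key
  calc ∫ ξ in Set.univ.pi fun k => Set.Ioc (0:ℝ) (ℓ k), pd i f ξ
      = ∫ x in Set.Icc (0 : Fin (m+1) → ℝ) ℓ, pd i f x := by
        rw [volume_pi, setIntegral_congr_set Measure.univ_pi_Ioc_ae_eq_Icc]
        rfl
    _ = 0 := key

lemma volume_box_pos {ℓ : Fin n → ℝ} (hℓ : ∀ i, 0 < ℓ i) :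
    0 < volume (Set.univ.pi fun i => Set.Ioc (0:ℝ) (ℓ i)) := by
  rw [volume_pi, MeasureTheory.Measure.pi_pi]
  refine CanonicallyOrderedAdd.prod_pos.2 fun i _ => ?_
  rw [Real.volume_Ioc]
  simp [hℓ i]

/-- a continuous nonnegative periodic function with vanishing integral vanishes identically -/
lemma eq_zero_of_integral_box_eq_zero {ℓ : Fin n → ℝ} (hℓ : ∀ i, 0 < ℓ i)
    {F : (Fin n → ℝ) → ℝ} (hFc : Continuous F) (hFnn : ∀ x, 0 ≤ F x) (hFper : PerS ℓ F)
    (hint : ∫ x in Set.univ.pi fun i => Set.Ioc (0:ℝ) (ℓ i), F x = 0) :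
    ∀ x, F x = 0 := by
  have hae : F =ᵐ[volume.restrict (Set.univ.pi fun i => Set.Ioc (0:ℝ) (ℓ i))] 0 := by
    refine (setIntegral_eq_zero_iff_of_nonneg_ae ?_ (integrableOn_box hFc)).1 hint
    exact Filter.Eventually.of_forall fun x => hFnn x
  have hnull : volume ({x | F x ≠ 0} ∩ Set.univ.pi fun i => Set.Ioc (0:ℝ) (ℓ i)) = 0 := by
    have hm : MeasurableSet {x | F x ≠ 0} :=
      (isOpen_compl_iff.mpr (isClosed_eq hFc continuous_const)).measurableSet
    have h0 : (volume.restrict (Set.univ.pi fun i => Set.Ioc (0:ℝ) (ℓ i))) {x | F x ≠ 0} = 0 := by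
      have h' := hae
      rw [Filter.EventuallyEq, ae_iff] at h'
      simpa using h'
    rw [Measure.restrict_apply hm] at h0
    exact h0
  have hopen : IsOpen ((Set.univ.pi fun i => Set.Ioo (0:ℝ) (ℓ i)) ∩ {x | F x ≠ 0}) :=
    ((isOpen_set_pi Set.finite_univ fun i _ => isOpen_Ioo).inter
      (isOpen_compl_iff.mpr (isClosed_eq hFc continuous_const)))
  have hempty : (Set.univ.pi fun i => Set.Ioo (0:ℝ) (ℓ i)) ∩ {x | F x ≠ 0} = ∅ := by
    by_contra h
    have hne : ((Set.univ.pi fun i => Set.Ioo (0:ℝ) (ℓ i)) ∩ {x | F x ≠ 0}).Nonempty :=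
      Set.nonempty_iff_ne_empty.2 h
    have hpos := hopen.measure_pos volume hne
    have hsub : (Set.univ.pi fun i => Set.Ioo (0:ℝ) (ℓ i)) ∩ {x | F x ≠ 0}
        ⊆ {x | F x ≠ 0} ∩ Set.univ.pi fun i => Set.Ioc (0:ℝ) (ℓ i) := by
      rintro x ⟨hx1, hx2⟩
      exact ⟨hx2, fun i _ => Set.Ioo_subset_Ioc_self (hx1 i trivial)⟩
    exact absurd (measure_mono_null hsub hnull) hpos.ne'
  have hIoo : Set.EqOn F 0 (Set.univ.pi fun i => Set.Ioo (0:ℝ) (ℓ i)) := by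
    intro x hx
    by_contra h
    exact Set.eq_empty_iff_forall_notMem.1 hempty x ⟨hx, h⟩
  have hIcc : Set.EqOn F 0 (Set.univ.pi fun i => Set.Icc (0:ℝ) (ℓ i)) := by
    have hcl := hIoo.closure hFc continuous_const
    refine fun x hx => hcl ?_
    rw [closure_pi_set]
    intro i hi
    simpa [closure_Ioo (hℓ i).ne] using hx i hi
  intro x
  rw [← per_reduce hℓ hFper x]
  exact hIcc fun i _ => Set.Ico_subset_Icc_self (reduce_mem_Ico hℓ x i)

end StmtAux

/-- for a unit vector u, uᵀTu = 1 iff the directional derivative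
u·∇E vanishes identically (E invariant under translations along u). -/
theorem stmt_16 (n : ℕ) (ℓ : Fin n → ℝ) (hℓ : ∀ i, 0 < ℓ i)
    (E : (Fin n → ℝ) → ℝ) (hE : ContDiff ℝ (⊤ : ℕ∞) E) (hEpos : ∀ ξ, 0 < E ξ)
    (hEper : PerS ℓ E) (μ : ℝ) (hμ : 0 < μ)
    (φ : Fin n → (Fin n → ℝ) → ℝ)
    (hφsmooth : ∀ j, ContDiff ℝ (⊤ : ℕ∞) (φ j))
    (hφper : ∀ j, PerS ℓ (φ j))
    (hφmean : ∀ j, meanS ℓ (φ j) = 0)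
    (hφeq : ∀ j ξ, divS (fun η i =>
        φ j η * pd i (fun ζ => μ * Real.log (E ζ)) η - μ * pd i (φ j) η) ξ
      = pd j (fun η => E η / meanS ℓ E) ξ)
    (u : Fin n → ℝ) (hu : ∑ i, (u i) ^ 2 = 1) :
    (∑ j, ∑ k, u j *
        ((if j = k then (1:ℝ) else 0) -
          meanS ℓ (fun ξ => φ j ξ * pd k (fun ζ => μ * Real.log (E ζ)) ξ)) * u k = 1)
      ↔ ∀ ξ, (∑ i, u i * pd i E ξ) = 0 := by
  classical
  open StmtAux in
  cases n with
  | zero => exact absurd hu (by simp)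
  | succ m =>
  set box := Set.univ.pi fun i : Fin (m+1) => Set.Ioc (0:ℝ) (ℓ i) with hboxdef
  set s : (Fin (m+1) → ℝ) → ℝ := fun ζ => μ * Real.log (E ζ) with hsdef
  have hEne : ∀ ξ, E ξ ≠ 0 := fun ξ => (hEpos ξ).ne'
  have hsc : ContDiff ℝ (⊤ : ℕ∞) s := contDiff_const.mul (hE.log hEne)
  have hsper : PerS ℓ s := by
    intro ξ i
    simp only [hsdef]
    rw [hEper ξ i]
  have hprod : (0:ℝ) < ∏ i, ℓ i := Finset.prod_pos fun i _ => hℓ i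
  have hprodne : (1 / ∏ i, ℓ i : ℝ) ≠ 0 := by positivity
  have hIntOn : ∀ {f : (Fin (m+1) → ℝ) → ℝ}, Continuous f → IntegrableOn f box :=
    fun hf => integrableOn_box hf
  have hintEpos : 0 < ∫ ξ in box, E ξ := by
    rw [hboxdef]
    refine (setIntegral_pos_iff_support_of_nonneg_ae
      (Filter.Eventually.of_forall fun ξ => (hEpos ξ).le) (integrableOn_box hE.continuous)).2 ?_
    have hsupp : Function.support E = Set.univ := by
      ext ξ; simp [Function.mem_support, hEne ξ]
    rw [hsupp, Set.univ_inter]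
    exact volume_box_pos hℓ
  have hmeanSdef : ∀ f : (Fin (m+1) → ℝ) → ℝ,
      meanS ℓ f = (1 / ∏ i, ℓ i) * ∫ ξ in box, f ξ := fun f => rfl
  have hcpos : 0 < meanS ℓ E := by
    rw [hmeanSdef]
    exact mul_pos (by positivity) hintEpos
  set c := meanS ℓ E with hcdef
  have hcne : c ≠ 0 := hcpos.ne'
  set φu : (Fin (m+1) → ℝ) → ℝ := fun ξ => ∑ j, u j * φ j ξ with hφudef
  have hφuc : ContDiff ℝ (⊤ : ℕ∞) φu :=
    ContDiff.sum fun j _ => contDiff_const.mul (hφsmooth j)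
  have hφuper : PerS ℓ φu := by
    intro ξ i
    simp only [hφudef]
    exact Finset.sum_congr rfl fun j _ => by rw [hφper j ξ i]
  set ψ : (Fin (m+1) → ℝ) → ℝ := fun ξ => φu ξ / E ξ with hψdef
  have hψc : ContDiff ℝ (⊤ : ℕ∞) ψ := hφuc.div hE hEne
  have hψper : PerS ℓ ψ := by
    intro ξ i
    simp only [hψdef]
    rw [hφuper ξ i, hEper ξ i]
  have hψE : ∀ ξ, ψ ξ * E ξ = φu ξ := fun ξ => div_mul_cancel₀ _ (hEne ξ)
  set W : Fin (m+1) → (Fin (m+1) → ℝ) → ℝ :=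
    fun i ξ => φu ξ * pd i s ξ - μ * pd i φu ξ with hWdef
  have hWc : ∀ i, ContDiff ℝ (⊤ : ℕ∞) (W i) := fun i =>
    (hφuc.mul (contDiff_pd hsc i)).sub (contDiff_const.mul (contDiff_pd hφuc i))
  have hWper : ∀ i, PerS ℓ (W i) := by
    intro i ξ j
    simp only [hWdef]
    rw [hφuper ξ j, pd_per hsper i ξ j, pd_per hφuper i ξ j]
  have hpdφu : ∀ (i : Fin (m+1)) ξ, pd i φu ξ = ∑ j, u j * pd i (φ j) ξ := by
    intro i ξ
    rw [hφudef,
      pd_sum Finset.univ (fun j => fun η => u j * φ j η)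
        (fun j => contDiff_const.mul (hφsmooth j)) i ξ]
    exact Finset.sum_congr rfl fun j _ => pd_const_mul (u j) (hφsmooth j) i ξ
  -- the combined cell equation
  have hdiv : ∀ ξ, (∑ i, pd i (W i) ξ) = (1/c) * ∑ j, u j * pd j E ξ := by
    intro ξ
    have hWeq : ∀ i : Fin (m+1),
        W i = fun η => ∑ j, u j * (φ j η * pd i s η - μ * pd i (φ j) η) := by
      intro i
      funext η
      simp only [hWdef]
      rw [hpdφu i η, hφudef]
      rw [Finset.sum_mul, Finset.mul_sum, ← Finset.sum_sub_distrib]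
      exact Finset.sum_congr rfl fun j _ => by ring
    have h1 : ∀ i : Fin (m+1), pd i (W i) ξ
        = ∑ j, u j * pd i (fun η => φ j η * pd i s η - μ * pd i (φ j) η) ξ := by
      intro i
      rw [hWeq i,
        pd_sum Finset.univ (fun j => fun η => u j * (φ j η * pd i s η - μ * pd i (φ j) η))
          (fun j => contDiff_const.mul
            (((hφsmooth j).mul (contDiff_pd hsc i)).sub
              (contDiff_const.mul (contDiff_pd (hφsmooth j) i)))) i ξ]
      exact Finset.sum_congr rfl fun j _ =>
        pd_const_mul (u j)
          (((hφsmooth j).mul (contDiff_pd hsc i)).sub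
            (contDiff_const.mul (contDiff_pd (hφsmooth j) i))) i ξ
    calc ∑ i, pd i (W i) ξ
        = ∑ i, ∑ j, u j * pd i (fun η => φ j η * pd i s η - μ * pd i (φ j) η) ξ :=
          Finset.sum_congr rfl fun i _ => h1 i
      _ = ∑ j, ∑ i, u j * pd i (fun η => φ j η * pd i s η - μ * pd i (φ j) η) ξ :=
          Finset.sum_comm
      _ = ∑ j, u j * ∑ i, pd i (fun η => φ j η * pd i s η - μ * pd i (φ j) η) ξ :=
          Finset.sum_congr rfl fun j _ => (Finset.mul_sum _ _ _).symm
      _ = ∑ j, u j * pd j (fun η => E η / c) ξ := by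
          refine Finset.sum_congr rfl fun j _ => ?_
          rw [show (∑ i, pd i (fun η => φ j η * pd i s η - μ * pd i (φ j) η) ξ)
              = divS (fun η i => φ j η * pd i s η - μ * pd i (φ j) η) ξ from rfl]
          rw [hφeq j ξ]
      _ = (1/c) * ∑ j, u j * pd j E ξ := by
          rw [Finset.mul_sum]
          refine Finset.sum_congr rfl fun j _ => ?_
          rw [show (fun η => E η / c) = fun η => (1/c) * E η from
            funext fun η => by rw [one_div, inv_mul_eq_div],
            pd_const_mul (1/c) hE j ξ]
          ring
  -- integration by parts
  have hpdψW : ∀ i, Continuous fun ξ => pd i ψ ξ * W i ξ :=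
    fun i => (continuous_pd hψc i).mul (hWc i).continuous
  have hψpdW : ∀ i, Continuous fun ξ => ψ ξ * pd i (W i) ξ :=
    fun i => hψc.continuous.mul (continuous_pd (hWc i) i)
  have hIBP : ∀ i : Fin (m+1),
      (∫ ξ in box, pd i ψ ξ * W i ξ) + (∫ ξ in box, ψ ξ * pd i (W i) ξ) = 0 := by
    intro i
    have hperprod : PerS ℓ (fun η => ψ η * W i η) := by
      intro ξ j
      simp only
      rw [hψper ξ j, hWper i ξ j]
    have h0 := integral_pd_eq_zero hℓ (hψc.mul (hWc i)) hperprod i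
    rw [show (fun ξ => pd i (fun η => ψ η * W i η) ξ)
        = fun ξ => pd i ψ ξ * W i ξ + ψ ξ * pd i (W i) ξ from
      funext fun ξ => pd_mul hψc (hWc i) i ξ] at h0
    rw [← integral_add (hIntOn (hpdψW i)) (hIntOn (hψpdW i))]
    rw [hboxdef]
    exact h0
  have hsplit : (∫ ξ in box, ∑ i, pd i ψ ξ * W i ξ)
      + (∫ ξ in box, ψ ξ * (∑ i, pd i (W i) ξ)) = 0 := by
    have h1 : (∫ ξ in box, ∑ i, pd i ψ ξ * W i ξ)
        = ∑ i, ∫ ξ in box, pd i ψ ξ * W i ξ :=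
      integral_finset_sum Finset.univ fun i _ => hIntOn (hpdψW i)
    have h2 : (∫ ξ in box, ψ ξ * (∑ i, pd i (W i) ξ))
        = ∑ i, ∫ ξ in box, ψ ξ * pd i (W i) ξ := by
      rw [show (fun ξ => ψ ξ * (∑ i, pd i (W i) ξ))
          = fun ξ => ∑ i, ψ ξ * pd i (W i) ξ from
        funext fun ξ => Finset.mul_sum _ _ _]
      exact integral_finset_sum Finset.univ fun i _ => hIntOn (hψpdW i)
    rw [h1, h2, ← Finset.sum_add_distrib]
    exact Finset.sum_eq_zero fun i _ => hIBP i
  -- pointwise identities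
  have hWψ : ∀ i ξ, W i ξ = -(μ * (E ξ * pd i ψ ξ)) := by
    intro i ξ
    have h1 : pd i ψ ξ = (pd i φu ξ * E ξ - φu ξ * pd i E ξ) / (E ξ)^2 := by
      rw [hψdef]
      exact pd_div hφuc hE hEne i ξ
    have h2 : pd i s ξ = μ * (pd i E ξ / E ξ) := by
      rw [hsdef]
      exact pd_log hE hEpos μ i ξ
    simp only [hWdef]
    rw [h1, h2]
    have hz : E ξ ≠ 0 := hEne ξ
    field_simp
    ring
  have hsumW : ∀ ξ, (∑ i, pd i ψ ξ * W i ξ) = -(μ * (E ξ * ∑ i, (pd i ψ ξ)^2)) := by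
    intro ξ
    calc ∑ i, pd i ψ ξ * W i ξ = ∑ i, -(μ * (E ξ * (pd i ψ ξ)^2)) :=
        Finset.sum_congr rfl fun i _ => by rw [hWψ i ξ]; ring
      _ = -(μ * (E ξ * ∑ i, (pd i ψ ξ)^2)) := by
        rw [Finset.mul_sum, Finset.mul_sum, ← Finset.sum_neg_distrib]
  set Q := ∫ ξ in box, E ξ * ∑ i, (pd i ψ ξ)^2 with hQdef
  set S := ∫ ξ in box, φu ξ * ∑ k, u k * pd k s ξ with hSdef
  have hQcont : Continuous fun ξ => E ξ * ∑ i, (pd i ψ ξ)^2 :=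
    hE.continuous.mul (continuous_finset_sum _ fun i _ => (continuous_pd hψc i).pow 2)
  have hScont : Continuous fun ξ => φu ξ * ∑ k, u k * pd k s ξ :=
    hφuc.continuous.mul (continuous_finset_sum _ fun k _ =>
      continuous_const.mul (continuous_pd hsc k))
  have hI1 : (∫ ξ in box, ∑ i, pd i ψ ξ * W i ξ) = -(μ * Q) := by
    rw [show (fun ξ => ∑ i, pd i ψ ξ * W i ξ)
        = fun ξ => -(μ * (E ξ * ∑ i, (pd i ψ ξ)^2)) from funext hsumW]
    rw [integral_neg, integral_const_mul, hQdef]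
  have hptI2 : ∀ ξ, ψ ξ * (∑ i, pd i (W i) ξ)
      = (1/(c*μ)) * (φu ξ * ∑ k, u k * pd k s ξ) := by
    intro ξ
    rw [hdiv ξ]
    have hφus : ∀ k, φu ξ * (u k * pd k s ξ) = μ * (ψ ξ * (u k * pd k E ξ)) := by
      intro k
      have h2 : pd k s ξ = μ * (pd k E ξ / E ξ) := by
        rw [hsdef]
        exact pd_log hE hEpos μ k ξ
      rw [h2, hψdef]
      field_simp
    have hkey : φu ξ * ∑ k, u k * pd k s ξ = μ * (ψ ξ * ∑ k, u k * pd k E ξ) := by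
      rw [Finset.mul_sum, Finset.mul_sum, Finset.mul_sum]
      exact Finset.sum_congr rfl fun k _ => hφus k
    rw [hkey]
    field_simp
  have hI2 : (∫ ξ in box, ψ ξ * (∑ i, pd i (W i) ξ)) = (1/(c*μ)) * S := by
    rw [show (fun ξ => ψ ξ * (∑ i, pd i (W i) ξ))
        = fun ξ => (1/(c*μ)) * (φu ξ * ∑ k, u k * pd k s ξ) from funext hptI2]
    rw [integral_const_mul, hSdef]
  have hSQ : S = c * μ^2 * Q := by
    have h := hsplit
    rw [hI1, hI2] at h
    have h' : (1/(c*μ)) * S = μ * Q := by linarith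
    calc S = (c*μ) * ((1/(c*μ)) * S) := by
          field_simp
      _ = (c*μ) * (μ*Q) := by rw [h']
      _ = c * μ^2 * Q := by ring
  -- reduction of the quadratic form
  have hptS : ∀ ξ, (∑ j, ∑ k, u j * u k * (φ j ξ * pd k s ξ))
      = φu ξ * ∑ k, u k * pd k s ξ := by
    intro ξ
    rw [hφudef, Finset.sum_mul]
    refine Finset.sum_congr rfl fun j _ => ?_
    rw [Finset.mul_sum]
    exact Finset.sum_congr rfl fun k _ => by ring
  have hMean : (∑ j, ∑ k, u j * meanS ℓ (fun ξ => φ j ξ * pd k s ξ) * u k)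
      = (1/∏ i, ℓ i) * S := by
    have h1 : ∀ j k : Fin (m+1), u j * meanS ℓ (fun ξ => φ j ξ * pd k s ξ) * u k
        = (1/∏ i, ℓ i) * ∫ ξ in box, u j * u k * (φ j ξ * pd k s ξ) := by
      intro j k
      rw [hmeanSdef, show (fun ξ => u j * u k * (φ j ξ * pd k s ξ))
          = fun ξ => (u j * u k) * (φ j ξ * pd k s ξ) from funext fun ξ => by ring,
        integral_const_mul]
      ring
    calc (∑ j, ∑ k, u j * meanS ℓ (fun ξ => φ j ξ * pd k s ξ) * u k)
        = ∑ j, ∑ k, (1/∏ i, ℓ i) * ∫ ξ in box, u j * u k * (φ j ξ * pd k s ξ) :=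
          Finset.sum_congr rfl fun j _ => Finset.sum_congr rfl fun k _ => h1 j k
      _ = (1/∏ i, ℓ i) * ∑ j, ∑ k, ∫ ξ in box, u j * u k * (φ j ξ * pd k s ξ) := by
          rw [Finset.mul_sum]
          exact Finset.sum_congr rfl fun j _ => (Finset.mul_sum _ _ _).symm
      _ = (1/∏ i, ℓ i) * ∫ ξ in box, ∑ j, ∑ k, u j * u k * (φ j ξ * pd k s ξ) := by
          congr 1
          rw [integral_finset_sum Finset.univ (fun j _ => ?_)]
          · exact Finset.sum_congr rfl fun j _ =>
              (integral_finset_sum Finset.univ fun k _ => hIntOn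
                ((continuous_const.mul continuous_const).mul
                  ((hφsmooth j).continuous.mul (continuous_pd hsc k)))).symm
          · exact integrable_finset_sum Finset.univ fun k _ => hIntOn
              ((continuous_const.mul continuous_const).mul
                ((hφsmooth j).continuous.mul (continuous_pd hsc k)))
      _ = (1/∏ i, ℓ i) * S := by
          rw [show (fun ξ => ∑ j, ∑ k, u j * u k * (φ j ξ * pd k s ξ))
              = fun ξ => φu ξ * ∑ k, u k * pd k s ξ from funext hptS, hSdef]
  have hδ : (∑ j, ∑ k, u j * (if j = k then (1:ℝ) else 0) * u k) = 1 := by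
    have hrow : ∀ j : Fin (m+1), (∑ k, u j * (if j = k then (1:ℝ) else 0) * u k) = u j^2 := by
      intro j
      rw [Finset.sum_eq_single j]
      · simp [sq]
      · intro k _ hk
        simp [Ne.symm hk]
      · simp
    rw [Finset.sum_congr rfl fun j _ => hrow j, hu]
  have hexp : (∑ j, ∑ k, u j *
        ((if j = k then (1:ℝ) else 0) - meanS ℓ (fun ξ => φ j ξ * pd k s ξ)) * u k)
      = (∑ j, ∑ k, u j * (if j = k then (1:ℝ) else 0) * u k)
        - (∑ j, ∑ k, u j * meanS ℓ (fun ξ => φ j ξ * pd k s ξ) * u k) := by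
    rw [← Finset.sum_sub_distrib]
    refine Finset.sum_congr rfl fun j _ => ?_
    rw [← Finset.sum_sub_distrib]
    exact Finset.sum_congr rfl fun k _ => by ring
  have hgoalIff : (∑ j, ∑ k, u j *
        ((if j = k then (1:ℝ) else 0) - meanS ℓ (fun ξ => φ j ξ * pd k s ξ)) * u k = 1)
      ↔ S = 0 := by
    rw [hexp, hδ, hMean]
    constructor
    · intro h
      have h0 : (1/∏ i, ℓ i) * S = 0 := by linarith
      rcases mul_eq_zero.1 h0 with h' | h'
      · exact absurd h' hprodne
      · exact h'
    · intro h
      rw [h]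
      ring
  rw [hgoalIff]
  constructor
  · -- S = 0 ⇒ directional derivative vanishes
    intro hS0
    have hQ0 : Q = 0 := by
      have h := hSQ
      rw [hS0] at h
      have hcm : c * μ^2 ≠ 0 := by positivity
      rcases mul_eq_zero.1 h.symm with h' | h'
      · exact absurd h' hcm
      · exact h'
    have hGper : PerS ℓ (fun ξ => E ξ * ∑ i, (pd i ψ ξ)^2) := by
      intro ξ j
      simp only
      rw [hEper ξ j]
      congr 1
      exact Finset.sum_congr rfl fun i _ => by rw [pd_per hψper i ξ j]
    have hG0 := eq_zero_of_integral_box_eq_zero hℓ hQcont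
      (fun ξ => mul_nonneg (hEpos ξ).le (Finset.sum_nonneg fun i _ => sq_nonneg _))
      hGper (by rw [← hboxdef]; exact hQdef ▸ hQ0)
    have hpdψ0 : ∀ ξ (i : Fin (m+1)), pd i ψ ξ = 0 := by
      intro ξ i
      have h := hG0 ξ
      have hsum0 : (∑ i, (pd i ψ ξ)^2) = 0 := by
        rcases mul_eq_zero.1 h with h' | h'
        · exact absurd h' (hEne ξ)
        · exact h'
      have := (Finset.sum_eq_zero_iff_of_nonneg fun i _ => sq_nonneg (pd i ψ ξ)).1
        hsum0 i (Finset.mem_univ i)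
      exact pow_eq_zero_iff (two_ne_zero) |>.1 this
    have hψconst : ∀ ξ, ψ ξ = ψ 0 :=
      fun ξ => const_of_pd_zero hψc (fun ξ i => hpdψ0 ξ i) ξ 0
    have hφuE : ∀ ξ, φu ξ = ψ 0 * E ξ := by
      intro ξ
      rw [← hψE ξ, hψconst ξ]
    have hφuint0 : (∫ ξ in box, φu ξ) = 0 := by
      rw [hφudef]
      beta_reduce
      rw [integral_finset_sum (f := fun j ξ => u j * φ j ξ) Finset.univ fun j _ =>
        hIntOn (continuous_const.mul (hφsmooth j).continuous)]
      refine Finset.sum_eq_zero fun j _ => ?_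
      rw [integral_const_mul]
      have hm := hφmean j
      rw [hmeanSdef] at hm
      rcases mul_eq_zero.1 hm with h' | h'
      · exact absurd h' hprodne
      · rw [h', mul_zero]
    have hψ00 : ψ 0 = 0 := by
      have h : (∫ ξ in box, φu ξ) = ψ 0 * ∫ ξ in box, E ξ := by
        rw [show (fun ξ => φu ξ) = fun ξ => ψ 0 * E ξ from funext hφuE, integral_const_mul]
      rw [hφuint0] at h
      rcases mul_eq_zero.1 h.symm with h' | h'
      · exact h'
      · exact absurd h' hintEpos.ne'
    have hφu0 : ∀ ξ, φu ξ = 0 := by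
      intro ξ
      rw [hφuE ξ, hψ00, zero_mul]
    intro ξ
    have hWzero : ∀ i : Fin (m+1), pd i (W i) ξ = 0 := by
      intro i
      have hWfun : W i = fun _ => (0:ℝ) := by
        funext η
        simp only [hWdef]
        have hpdφu0 : pd i φu η = 0 := by
          rw [show φu = fun _ : Fin (m+1) → ℝ => (0:ℝ) from funext hφu0]
          exact pd_zero_fun i η
        rw [hφu0 η, hpdφu0]
        ring
      rw [hWfun]
      exact pd_zero_fun i ξ
    have h := hdiv ξ
    rw [Finset.sum_congr rfl fun i _ => hWzero i, Finset.sum_const_zero] at h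
    rcases mul_eq_zero.1 h.symm with h' | h'
    · exact absurd h' (by positivity)
    · exact h'
  · -- converse
    intro h2
    have hI2' : (∫ ξ in box, ψ ξ * (∑ i, pd i (W i) ξ)) = 0 := by
      rw [show (fun ξ => ψ ξ * (∑ i, pd i (W i) ξ)) = fun _ => (0:ℝ) from
        funext fun ξ => by rw [hdiv ξ, h2 ξ, mul_zero, mul_zero]]
      simp
    have hQ0 : Q = 0 := by
      have h := hsplit
      rw [hI1, hI2'] at h
      have : μ * Q = 0 := by linarith
      rcases mul_eq_zero.1 this with h' | h'
      · exact absurd h' hμ.ne'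
      · exact h'
    rw [hSQ, hQ0, mul_zero]
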